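/- arXiv:math/0403543 — 5 statements merged into one kernel-verified Lean document; each statement's English description precedes it below -/
import Mathlib

section
/- The automorphism group of the MacLane combinatorics is isomorphic to GL(2, F₃) acting on F₃² \ {0}; in particular it has order 48. -/
abbrev V3 := ZMod 3 × ZMod 3

/-- The lines of the MacLane combinatorics: nonzero points of `F₃²`. -/
abbrev MLL := {x : V3 // x ≠ 0}

/-- An affine line in `F₃²`. -/
def IsAffLine (S : Set V3) : Prop :=
  ∃ v w : V3, w ≠ 0 ∧ S = {p | ∃ t : ZMod 3, p = v + t • w}

/-- The points of the MacLane combinatorics, as subsets of `L = F₃² \ {0}`. -/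
def macLanePts : Set (Set MLL) :=
  {T | ∃ S : Set V3, IsAffLine S ∧ T = {x : MLL | (x : V3) ∈ S}}

lemma v3_three (v : V3) : v + v + v = 0 := by
  have h : ∀ a : ZMod 3, a + a + a = 0 := by decide
  exact Prod.ext (h v.1) (h v.2)

lemma v3_smul_two (v : V3) : (2 : ZMod 3) • v = -v := by
  have : (2 : ZMod 3) = -1 := by decide
  rw [this, neg_smul, one_smul]

lemma v3_double (v : V3) : v + v = -v := by
  linear_combination v3_three v

lemma v3_smul_cancel {w : V3} (hw : w ≠ 0) {a b : ZMod 3} (h : a • w = b • w) : a = b := by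
  have h2 : (a - b) • w = 0 := by rw [sub_smul, h, sub_self]
  rcases smul_eq_zero.mp h2 with h3 | h3
  · exact sub_eq_zero.mp h3
  · exact absurd h3 hw

lemma zmod3_cases (t : ZMod 3) : t = 0 ∨ t = 1 ∨ t = 2 := by revert t; decide

/-- The natural homomorphism from linear automorphisms to permutations of `MLL`. -/
def mlPhi : (V3 ≃ₗ[ZMod 3] V3) →* Equiv.Perm MLL where
  toFun e :=
    { toFun := fun x => ⟨e x, by simp [x.2]⟩
      invFun := fun x => ⟨e.symm x, by simp [x.2]⟩
      left_inv := fun x => by simp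
      right_inv := fun x => by simp }
  map_one' := Equiv.ext fun x => rfl
  map_mul' e₁ e₂ := Equiv.ext fun x => rfl

lemma mlPhi_apply (e : V3 ≃ₗ[ZMod 3] V3) (x : MLL) : (mlPhi e x : V3) = e x := rfl

lemma mlPhi_fwd (e : V3 ≃ₗ[ZMod 3] V3) (T : Set MLL) (hT : T ∈ macLanePts) :
    mlPhi e '' T ∈ macLanePts := by
  obtain ⟨S, ⟨v, w, hw, hS⟩, rfl⟩ := hT
  refine ⟨e '' S, ⟨e v, e w, by simp [hw], ?_⟩, ?_⟩
  · ext p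
    constructor
    · rintro ⟨q, hq, rfl⟩
      rw [hS] at hq
      obtain ⟨t, rfl⟩ := hq
      exact ⟨t, by simp⟩
    · rintro ⟨t, rfl⟩
      exact ⟨v + t • w, by rw [hS]; exact ⟨t, rfl⟩, by simp⟩
  · ext x
    constructor
    · rintro ⟨y, hy, rfl⟩
      exact ⟨(y : V3), hy, rfl⟩
    · rintro ⟨q, hq, hq'⟩
      refine ⟨⟨q, ?_⟩, hq, ?_⟩
      · rintro rfl; exact x.2 (by rw [← hq']; simp)
      · exact Subtype.ext hq'

section sig
variable (σ : Equiv.Perm MLL) (hσ : ∀ T ∈ macLanePts, σ '' T ∈ macLanePts)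
include hσ

lemma sigma_neg (x : MLL) (hx : -(x : V3) ≠ 0) : (σ ⟨-(x : V3), hx⟩ : V3) = -(σ x : V3) := by
  set x' : MLL := ⟨-(x : V3), hx⟩ with hx'
  have hxx' : x ≠ x' := by
    intro h
    apply x.2
    have h1 : (x : V3) = -(x : V3) := congrArg Subtype.val h
    linear_combination (v3_three (x : V3)) - h1
  have hT : ({x, x'} : Set MLL) ∈ macLanePts := by
    refine ⟨{p | ∃ t : ZMod 3, p = 0 + t • (x : V3)}, ⟨0, x, x.2, rfl⟩, ?_⟩
    ext u
    simp only [Set.mem_insert_iff, Set.mem_singleton_iff, Set.mem_setOf_eq]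
    constructor
    · rintro (rfl | rfl)
      · exact ⟨1, by simp⟩
      · exact ⟨2, by simp [v3_smul_two, hx']⟩
    · rintro ⟨t, ht⟩
      rw [zero_add] at ht
      rcases zmod3_cases t with rfl | rfl | rfl
      · exact absurd (by rw [ht, zero_smul]) u.2
      · left; exact Subtype.ext (by rw [ht, one_smul])
      · right; exact Subtype.ext (by rw [ht, v3_smul_two])
  obtain ⟨S', ⟨v, w, hw, rfl⟩, hTr⟩ := hσ _ hT
  have hmx : σ x ∈ σ '' {x, x'} := ⟨x, Set.mem_insert _ _, rfl⟩
  have hmx' : σ x' ∈ σ '' {x, x'} := ⟨x', Set.mem_insert_of_mem _ rfl, rfl⟩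
  rw [hTr] at hmx hmx'
  obtain ⟨t₁, h1⟩ := hmx
  obtain ⟨t₂, h2⟩ := hmx'
  have htne : t₁ ≠ t₂ := by
    rintro rfl
    exact hxx' (σ.injective (Subtype.ext (h1.trans h2.symm)))
  set t₃ : ZMod 3 := -(t₁ + t₂) with ht₃
  have hne : t₃ ≠ t₁ ∧ t₃ ≠ t₂ := by
    have : ∀ a b : ZMod 3, a ≠ b → -(a + b) ≠ a ∧ -(a + b) ≠ b := by decide
    exact this t₁ t₂ htne
  have hu : v + t₃ • w = 0 := by
    by_contra h
    have : (⟨v + t₃ • w, h⟩ : MLL) ∈ σ '' {x, x'} := by rw [hTr]; exact ⟨t₃, rfl⟩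
    rcases this with ⟨y, hy, hyeq⟩
    have hcoord : v + t₃ • w = (σ y : V3) := by rw [hyeq]
    rcases hy with rfl | rfl
    · rw [h1] at hcoord
      exact hne.1 (v3_smul_cancel hw (add_left_cancel hcoord))
    · rw [h2] at hcoord
      exact hne.2 (v3_smul_cancel hw (add_left_cancel hcoord))
  have hv : v = -(t₃ • w) := by linear_combination hu
  have key : ∀ a b : ZMod 3, (b - -(a + b)) = -(a - -(a + b)) := by decide
  rw [h1, h2, hv]
  calc -(t₃ • w) + t₂ • w = (t₂ - t₃) • w := by rw [sub_smul]; abel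
    _ = (-(t₁ - t₃)) • w := by rw [ht₃, key t₁ t₂]
    _ = -((t₁ - t₃) • w) := by rw [neg_smul]
    _ = -(-(t₃ • w) + t₁ • w) := by rw [sub_smul]; abel_nf

lemma sigma_sum (x y z : MLL) (hxy : x ≠ y) (hxz : x ≠ z) (hyz : y ≠ z)
    (hsum : (x : V3) + y + z = 0) : (σ x : V3) + σ y + σ z = 0 := by
  have hw : (y : V3) - x ≠ 0 := sub_ne_zero.mpr (fun h => hxy (Subtype.ext h.symm))
  have hz2 : (z : V3) = (x : V3) + (2 : ZMod 3) • ((y : V3) - x) := by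
    rw [v3_smul_two]
    linear_combination hsum - v3_three (x : V3)
  have hT : ({x, y, z} : Set MLL) ∈ macLanePts := by
    refine ⟨{p | ∃ t : ZMod 3, p = (x : V3) + t • ((y : V3) - x)}, ⟨x, (y : V3) - x, hw, rfl⟩, ?_⟩
    ext u
    simp only [Set.mem_insert_iff, Set.mem_singleton_iff, Set.mem_setOf_eq]
    constructor
    · rintro (rfl | rfl | rfl)
      · exact ⟨0, by rw [zero_smul, add_zero]⟩
      · exact ⟨1, by rw [one_smul]; abel⟩
      · exact ⟨2, hz2⟩
    · rintro ⟨t, ht⟩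
      rcases zmod3_cases t with rfl | rfl | rfl
      · left; exact Subtype.ext (by rw [ht, zero_smul, add_zero])
      · right; left; exact Subtype.ext (by rw [ht, one_smul]; abel)
      · right; right; exact Subtype.ext (by rw [ht, ← hz2])
  obtain ⟨S', ⟨v, w, hw', rfl⟩, hTr⟩ := hσ _ hT
  have hmx : σ x ∈ σ '' {x, y, z} := ⟨x, Set.mem_insert _ _, rfl⟩
  have hmy : σ y ∈ σ '' {x, y, z} := ⟨y, Set.mem_insert_of_mem _ (Set.mem_insert _ _), rfl⟩
  have hmz : σ z ∈ σ '' {x, y, z} :=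
    ⟨z, Set.mem_insert_of_mem _ (Set.mem_insert_of_mem _ rfl), rfl⟩
  rw [hTr] at hmx hmy hmz
  obtain ⟨t₁, h1⟩ := hmx
  obtain ⟨t₂, h2⟩ := hmy
  obtain ⟨t₃, h3⟩ := hmz
  have d12 : t₁ ≠ t₂ := by rintro rfl; exact hxy (σ.injective (Subtype.ext (h1.trans h2.symm)))
  have d13 : t₁ ≠ t₃ := by rintro rfl; exact hxz (σ.injective (Subtype.ext (h1.trans h3.symm)))
  have d23 : t₂ ≠ t₃ := by rintro rfl; exact hyz (σ.injective (Subtype.ext (h2.trans h3.symm)))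
  have hts : t₁ + t₂ + t₃ = 0 := by
    have : ∀ a b c : ZMod 3, a ≠ b → a ≠ c → b ≠ c → a + b + c = 0 := by decide
    exact this _ _ _ d12 d13 d23
  rw [h1, h2, h3]
  calc (v + t₁ • w) + (v + t₂ • w) + (v + t₃ • w)
      = (v + v + v) + (t₁ + t₂ + t₃) • w := by rw [add_smul, add_smul]; abel
    _ = 0 := by rw [v3_three, hts, zero_smul, add_zero]

end sig

/-- Every permutation preserving the point set comes from a linear automorphism. -/
lemma sigma_in_range (σ : Equiv.Perm MLL)
    (hσ : ∀ T ∈ macLanePts, σ '' T ∈ macLanePts) : ∃ e : V3 ≃ₗ[ZMod 3] V3, mlPhi e = σ := by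
  classical
  set g : V3 → V3 := fun p => if h : p = 0 then 0 else σ ⟨p, h⟩ with hg
  have hgne : ∀ (p : V3) (hp : p ≠ 0), g p = σ ⟨p, hp⟩ := fun p hp => dif_neg hp
  have hg0 : g 0 = 0 := dif_pos rfl
  have hgneg : ∀ (p : V3), p ≠ 0 → g (-p) = -g p := by
    intro p hp
    have hnp : -p ≠ 0 := neg_ne_zero.mpr hp
    rw [hgne p hp, hgne (-p) hnp]
    exact sigma_neg σ hσ ⟨p, hp⟩ hnp
  have hadd : ∀ p q : V3, g (p + q) = g p + g q := by
    intro p q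
    by_cases hp : p = 0
    · subst hp; rw [zero_add, hg0, zero_add]
    by_cases hq : q = 0
    · subst hq; rw [add_zero, hg0, add_zero]
    by_cases hqp : q = p
    · subst hqp
      rw [v3_double q, hgneg q hq, v3_double (g q)]
    by_cases hqp' : q = -p
    · subst hqp'
      rw [add_neg_cancel, hg0, hgneg p hp, add_neg_cancel]
    · have hpq : p + q ≠ 0 := fun h => hqp' (by linear_combination h)
      have hz : -(p + q) ≠ 0 := neg_ne_zero.mpr hpq
      have hXY : (⟨p, hp⟩ : MLL) ≠ ⟨q, hq⟩ := fun h =>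
        hqp (congrArg Subtype.val h).symm
      have hXZ : (⟨p, hp⟩ : MLL) ≠ ⟨-(p + q), hz⟩ := by
        intro h
        have h1 : p = -(p + q) := congrArg Subtype.val h
        exact hqp (by linear_combination h1 - v3_three p)
      have hYZ : (⟨q, hq⟩ : MLL) ≠ ⟨-(p + q), hz⟩ := by
        intro h
        have h1 : q = -(p + q) := congrArg Subtype.val h
        exact hqp (by linear_combination v3_three q - h1)
      have hs := sigma_sum σ hσ ⟨p, hp⟩ ⟨q, hq⟩ ⟨-(p + q), hz⟩ hXY hXZ hYZ (by exact add_neg_cancel (p + q))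
      rw [← hgne p hp, ← hgne q hq, ← hgne _ hz, hgneg _ hpq] at hs
      linear_combination -hs
  have hginj : Function.Injective g := by
    intro a b h
    by_cases ha : a = 0 <;> by_cases hb : b = 0
    · rw [ha, hb]
    · rw [ha, hg0, hgne b hb] at h; exact absurd h.symm (σ ⟨b, hb⟩).2
    · rw [hb, hg0, hgne a ha] at h; exact absurd h (σ ⟨a, ha⟩).2
    · rw [hgne a ha, hgne b hb] at h
      exact congrArg Subtype.val (σ.injective (Subtype.ext h))
  set f : V3 →ₗ[ZMod 3] V3 := (AddMonoidHom.mk' g hadd).toZModLinearMap 3 with hf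
  have hfbij : Function.Bijective f := Finite.injective_iff_bijective.mp hginj
  refine ⟨LinearEquiv.ofBijective f hfbij, Equiv.ext fun u => ?_⟩
  apply Subtype.ext
  have h4 : (⟨(u : V3), u.2⟩ : MLL) = u := Subtype.ext rfl
  rw [← h4]
  exact hgne (u : V3) u.2

/-- The automorphism group of the MacLane combinatorics is isomorphic to `GL(2,F₃)`
acting on `F₃² \ {0}`; in particular it has order `48`. -/
theorem macLane_aut_is_GL2F3 :
    (∃ φ : (V3 ≃ₗ[ZMod 3] V3) →* Equiv.Perm MLL,
      Function.Injective φ ∧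
      (∀ σ : Equiv.Perm MLL, σ ∈ Set.range φ ↔
        ∀ T : Set MLL, T ∈ macLanePts ↔ σ '' T ∈ macLanePts)) ∧
    Nat.card (V3 ≃ₗ[ZMod 3] V3) = 48 := by
  constructor
  · refine ⟨mlPhi, ?_, ?_⟩
    · intro e e' h
      refine LinearEquiv.ext fun p => ?_
      by_cases hp : p = 0
      · rw [hp, map_zero, map_zero]
      · exact congrArg (fun σ : Equiv.Perm MLL => (σ ⟨p, hp⟩ : V3)) h
    · intro σ
      constructor
      · rintro ⟨e, rfl⟩ T
        constructor
        · exact mlPhi_fwd e T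
        · intro h
          have h2 := mlPhi_fwd e⁻¹ _ h
          rw [map_inv] at h2
          have h3 : ⇑((mlPhi e)⁻¹) '' (⇑(mlPhi e) '' T) = T := by
            rw [← Set.image_comp]
            have : ⇑((mlPhi e)⁻¹) ∘ ⇑(mlPhi e) = id :=
              funext fun u => Equiv.symm_apply_apply _ _
            rw [this, Set.image_id]
          rwa [h3] at h2
      · intro h
        obtain ⟨e, he⟩ := sigma_in_range σ (fun T hT => (h T).mp hT)
        exact ⟨e, he⟩
  · have e1 : V3 ≃ₗ[ZMod 3] (Fin 2 → ZMod 3) := (LinearEquiv.finTwoArrow (ZMod 3) (ZMod 3)).symm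
    have eq1 : Nat.card (V3 ≃ₗ[ZMod 3] V3)
        = Nat.card ((Fin 2 → ZMod 3) ≃ₗ[ZMod 3] (Fin 2 → ZMod 3)) := by
      refine Nat.card_congr ⟨fun f => (e1.symm.trans f).trans e1,
        fun g => (e1.trans g).trans e1.symm, ?_, ?_⟩ <;> intro f <;> ext x <;> simp
    have eq2 : Nat.card ((Fin 2 → ZMod 3) ≃ₗ[ZMod 3] (Fin 2 → ZMod 3))
        = Nat.card (GL (Fin 2) (ZMod 3)) := by
      refine Nat.card_congr ?_
      exact ((LinearMap.GeneralLinearGroup.generalLinearEquiv (ZMod 3) (Fin 2 → ZMod 3)).symm.trans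
        (Units.mapEquiv (LinearMap.toMatrixAlgEquiv'.toRingEquiv.toMulEquiv))).toEquiv
    rw [eq1, eq2, Matrix.card_GL_field]
    simp [Fin.prod_univ_two, ZMod.card]
end

section
/- The MacLane combinatorics is not 3-admissible: there is no assignment of nonzero vectors v₀,…,v₇ ∈ ℤ² to the 8 lines satisfying the three admissibility conditions. -/
/-- Two vectors in `ℤ²` are linearly dependent iff their determinant vanishes. -/
def dep (u w : ℤ × ℤ) : Prop := u.1 * w.2 - u.2 * w.1 = 0

/-- A line combinatorics `(L, Ps)` (with only double and triple points) is 3-admissible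
via an assignment `v` of vectors to the lines if: all vectors are nonzero; some triple
point has vectors spanning a rank-two sublattice; for every point `P` and every line
`i ∈ P`, `v i` and `∑_{j ∈ P} v j` are linearly dependent; and the total sum vanishes. -/
def Admissible {ι : Type*} [DecidableEq ι] (L : Finset ι) (Ps : Finset (Finset ι))
    (v : ι → ℤ × ℤ) : Prop :=
  (∀ i ∈ L, v i ≠ 0) ∧
  (∃ P ∈ Ps, P.card = 3 ∧ ∃ i ∈ P, ∃ j ∈ P, ¬ dep (v i) (v j)) ∧
  (∀ P ∈ Ps, ∀ i ∈ P, dep (v i) (∑ j ∈ P, v j)) ∧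
  (∑ i ∈ L, v i = 0)

/-- The MacLane combinatorics on lines `{0,…,7}`: double points
`{0,7},{1,6},{2,3},{4,5}` and triple points
`{0,1,2},{3,6,7},{0,5,6},{1,4,7},{1,3,5},{2,4,6},{2,5,7},{0,3,4}`. -/
def macLaneP : Finset (Finset (Fin 8)) :=
  {{0, 7}, {1, 6}, {2, 3}, {4, 5},
   {0, 1, 2}, {3, 6, 7}, {0, 5, 6}, {1, 4, 7}, {1, 3, 5}, {2, 4, 6}, {2, 5, 7}, {0, 3, 4}}

lemma dep_refl (x : ℤ × ℤ) : dep x x := by unfold dep; ring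

lemma dep_symm {x y : ℤ × ℤ} (h : dep x y) : dep y x := by
  unfold dep at *; linarith

lemma not_dep_symm {x y : ℤ × ℤ} (h : ¬ dep x y) : ¬ dep y x := fun h' => h (dep_symm h')

lemma dep_trans {u x y : ℤ × ℤ} (hu : u ≠ 0) (hx : dep u x) (hy : dep u y) : dep x y := by
  have hc : u.1 ≠ 0 ∨ u.2 ≠ 0 := by
    by_contra hc; push_neg at hc
    exact hu (Prod.ext hc.1 hc.2)
  unfold dep at *
  rcases hc with hc | hc
  · have h1 : u.1 * (x.1 * y.2 - x.2 * y.1) = 0 := by linear_combination x.1 * hy - y.1 * hx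
    exact (mul_eq_zero.mp h1).resolve_left hc
  · have h1 : u.2 * (x.1 * y.2 - x.2 * y.1) = 0 := by linear_combination x.2 * hy - y.2 * hx
    exact (mul_eq_zero.mp h1).resolve_left hc

lemma sum_eq_zero {x y s : ℤ × ℤ} (hx : dep x s) (hy : dep y s) (h : ¬ dep x y) : s = 0 := by
  by_contra hs
  exact h (dep_trans hs (dep_symm hx) (dep_symm hy))

lemma indep_transfer {x y x' y' : ℤ × ℤ} (h : ¬ dep x y) (hx : dep x x') (hy : dep y y')
    (hx' : x' ≠ 0) (hy' : y' ≠ 0) : ¬ dep x' y' := fun hd =>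
  h (dep_trans hy' (dep_symm (dep_trans hx' (dep_symm hx) hd)) (dep_symm hy))

lemma key3 {x y z : ℤ × ℤ} (hx : dep x (x + y + z)) (hy : dep y (x + y + z))
    (hz : dep z (x + y + z)) (h : ¬ (dep x y ∧ dep x z ∧ dep y z)) :
    ¬ dep x y ∧ ¬ dep x z ∧ ¬ dep y z := by
  have h0 : x + y + z = 0 := by
    by_contra hs
    exact h ⟨dep_trans hs (dep_symm hx) (dep_symm hy),
      dep_trans hs (dep_symm hx) (dep_symm hz),
      dep_trans hs (dep_symm hy) (dep_symm hz)⟩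
  have h1 : x.1 + y.1 + z.1 = 0 := by simpa using congrArg Prod.fst h0
  have h2 : x.2 + y.2 + z.2 = 0 := by simpa using congrArg Prod.snd h0
  by_cases hxy : dep x y
  · refine absurd ⟨hxy, ?_, ?_⟩ h
    · unfold dep at hxy ⊢; linear_combination -hxy + x.1 * h2 - x.2 * h1
    · unfold dep at hxy ⊢; linear_combination hxy - y.2 * h1 + y.1 * h2
  · refine ⟨hxy, fun hxz => hxy ?_, fun hyz => hxy ?_⟩
    · unfold dep at hxz ⊢; linear_combination -hxz + x.1 * h2 - x.2 * h1
    · unfold dep at hyz ⊢; linear_combination hyz + y.2 * h1 - y.1 * h2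

lemma sum3 (v : Fin 8 → ℤ × ℤ) {a b c : Fin 8} (hab : a ≠ b) (hac : a ≠ c) (hbc : b ≠ c) :
    ∑ j ∈ ({a, b, c} : Finset (Fin 8)), v j = v a + v b + v c := by
  rw [Finset.sum_insert (by simp [hab, hac]), Finset.sum_pair hbc, add_assoc]

/-- The MacLane combinatorics is not 3-admissible. -/
theorem macLane_not_admissible :
    ¬ ∃ v : Fin 8 → ℤ × ℤ, Admissible Finset.univ macLaneP v := by
  rintro ⟨v, hnz, ⟨P, hP, hcard, i, hi, j, hj, hindep⟩, h3, -⟩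
  have nz : ∀ i : Fin 8, v i ≠ 0 := fun i => hnz i (Finset.mem_univ i)
  -- double points: dependencies defining direction classes a,b,c,d
  have hdbl : ∀ (a b : Fin 8), ({a, b} : Finset (Fin 8)) ∈ macLaneP → a ≠ b →
      dep (v a) (v b) := by
    intro a b hm hab
    have h := h3 _ hm a (Finset.mem_insert_self a {b})
    rw [Finset.sum_pair hab] at h
    unfold dep at h ⊢
    simp only [Prod.fst_add, Prod.snd_add] at h
    linear_combination h
  have d07 : dep (v 0) (v 7) := hdbl 0 7 (by decide) (by decide)
  have d16 : dep (v 1) (v 6) := hdbl 1 6 (by decide) (by decide)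
  have d23 : dep (v 2) (v 3) := hdbl 2 3 (by decide) (by decide)
  have d45 : dep (v 4) (v 5) := hdbl 4 5 (by decide) (by decide)
  -- triple points: dep with sums
  have T1 : ∀ i ∈ ({0, 1, 2} : Finset (Fin 8)), dep (v i) (v 0 + v 1 + v 2) := by
    have := h3 {0, 1, 2} (by decide)
    rwa [sum3 v (by decide) (by decide) (by decide)] at this
  have T2 : ∀ i ∈ ({3, 6, 7} : Finset (Fin 8)), dep (v i) (v 3 + v 6 + v 7) := by
    have := h3 {3, 6, 7} (by decide)
    rwa [sum3 v (by decide) (by decide) (by decide)] at this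
  have T3 : ∀ i ∈ ({0, 5, 6} : Finset (Fin 8)), dep (v i) (v 0 + v 5 + v 6) := by
    have := h3 {0, 5, 6} (by decide)
    rwa [sum3 v (by decide) (by decide) (by decide)] at this
  have T4 : ∀ i ∈ ({1, 4, 7} : Finset (Fin 8)), dep (v i) (v 1 + v 4 + v 7) := by
    have := h3 {1, 4, 7} (by decide)
    rwa [sum3 v (by decide) (by decide) (by decide)] at this
  have T5 : ∀ i ∈ ({1, 3, 5} : Finset (Fin 8)), dep (v i) (v 1 + v 3 + v 5) := by
    have := h3 {1, 3, 5} (by decide)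
    rwa [sum3 v (by decide) (by decide) (by decide)] at this
  have T6 : ∀ i ∈ ({2, 4, 6} : Finset (Fin 8)), dep (v i) (v 2 + v 4 + v 6) := by
    have := h3 {2, 4, 6} (by decide)
    rwa [sum3 v (by decide) (by decide) (by decide)] at this
  have T7 : ∀ i ∈ ({2, 5, 7} : Finset (Fin 8)), dep (v i) (v 2 + v 5 + v 7) := by
    have := h3 {2, 5, 7} (by decide)
    rwa [sum3 v (by decide) (by decide) (by decide)] at this
  have T8 : ∀ i ∈ ({0, 3, 4} : Finset (Fin 8)), dep (v i) (v 0 + v 3 + v 4) := by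
    have := h3 {0, 3, 4} (by decide)
    rwa [sum3 v (by decide) (by decide) (by decide)] at this
  -- the final linear contradiction from five triple-sum equations
  have final : v 0 + v 1 + v 2 = 0 → v 0 + v 5 + v 6 = 0 → v 1 + v 3 + v 5 = 0 →
      v 2 + v 4 + v 6 = 0 → v 0 + v 3 + v 4 = 0 → False := by
    intro e1 e3 e5 e6 e8
    have h30 : v 0 + v 0 + v 0 = 0 := by linear_combination e1 + e3 - e5 - e6 + e8
    have a1 : (v 0).1 + (v 0).1 + (v 0).1 = 0 := by simpa using congrArg Prod.fst h30
    have a2 : (v 0).2 + (v 0).2 + (v 0).2 = 0 := by simpa using congrArg Prod.snd h30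
    exact nz 0 (Prod.ext (by simp only [Prod.fst_zero]; omega) (by simp only [Prod.snd_zero]; omega))
  -- the four cases of which classes are pairwise independent
  have caseABC : ¬ dep (v 0) (v 1) → ¬ dep (v 0) (v 2) → ¬ dep (v 1) (v 2) → False := by
    intro n01 n02 n12
    refine final (sum_eq_zero (T1 0 (by decide)) (T1 1 (by decide)) n01)
      (sum_eq_zero (T3 0 (by decide)) (T3 6 (by decide))
        (indep_transfer n01 (dep_refl _) d16 (nz 0) (nz 6)))
      (sum_eq_zero (T5 1 (by decide)) (T5 3 (by decide))
        (indep_transfer n12 (dep_refl _) d23 (nz 1) (nz 3)))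
      (sum_eq_zero (T6 2 (by decide)) (T6 6 (by decide))
        (indep_transfer (not_dep_symm n12) (dep_refl _) d16 (nz 2) (nz 6)))
      (sum_eq_zero (T8 0 (by decide)) (T8 3 (by decide))
        (indep_transfer n02 (dep_refl _) d23 (nz 0) (nz 3)))
  have caseABD : ¬ dep (v 0) (v 1) → ¬ dep (v 0) (v 4) → ¬ dep (v 1) (v 4) → False := by
    intro n01 n04 n14
    refine final (sum_eq_zero (T1 0 (by decide)) (T1 1 (by decide)) n01)
      (sum_eq_zero (T3 0 (by decide)) (T3 5 (by decide))
        (indep_transfer n04 (dep_refl _) d45 (nz 0) (nz 5)))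
      (sum_eq_zero (T5 1 (by decide)) (T5 5 (by decide))
        (indep_transfer n14 (dep_refl _) d45 (nz 1) (nz 5)))
      (sum_eq_zero (T6 4 (by decide)) (T6 6 (by decide))
        (indep_transfer (not_dep_symm n14) (dep_refl _) d16 (nz 4) (nz 6)))
      (sum_eq_zero (T8 0 (by decide)) (T8 4 (by decide)) n04)
  have caseBCD : ¬ dep (v 1) (v 2) → ¬ dep (v 1) (v 4) → ¬ dep (v 2) (v 4) → False := by
    intro n12 n14 n24
    refine final (sum_eq_zero (T1 1 (by decide)) (T1 2 (by decide)) n12)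
      (sum_eq_zero (T3 5 (by decide)) (T3 6 (by decide))
        (indep_transfer (not_dep_symm n14) d45 d16 (nz 5) (nz 6)))
      (sum_eq_zero (T5 1 (by decide)) (T5 3 (by decide))
        (indep_transfer n12 (dep_refl _) d23 (nz 1) (nz 3)))
      (sum_eq_zero (T6 2 (by decide)) (T6 4 (by decide)) n24)
      (sum_eq_zero (T8 3 (by decide)) (T8 4 (by decide))
        (indep_transfer n24 d23 (dep_refl _) (nz 3) (nz 4)))
  have caseACD : ¬ dep (v 0) (v 2) → ¬ dep (v 0) (v 4) → ¬ dep (v 2) (v 4) → False := by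
    intro n02 n04 n24
    refine final (sum_eq_zero (T1 0 (by decide)) (T1 2 (by decide)) n02)
      (sum_eq_zero (T3 0 (by decide)) (T3 5 (by decide))
        (indep_transfer n04 (dep_refl _) d45 (nz 0) (nz 5)))
      (sum_eq_zero (T5 3 (by decide)) (T5 5 (by decide))
        (indep_transfer n24 d23 d45 (nz 3) (nz 5)))
      (sum_eq_zero (T6 2 (by decide)) (T6 4 (by decide)) n24)
      (sum_eq_zero (T8 0 (by decide)) (T8 4 (by decide)) n04)
  -- case analysis on which point P carries the independent pair
  have hPs : P = {0, 7} ∨ P = {1, 6} ∨ P = {2, 3} ∨ P = {4, 5} ∨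
      P = {0, 1, 2} ∨ P = {3, 6, 7} ∨ P = {0, 5, 6} ∨ P = {1, 4, 7} ∨
      P = {1, 3, 5} ∨ P = {2, 4, 6} ∨ P = {2, 5, 7} ∨ P = {0, 3, 4} := by
    simpa [macLaneP, Finset.mem_insert, Finset.mem_singleton] using hP
  rcases hPs with rfl | rfl | rfl | rfl | rfl | rfl | rfl | rfl | rfl | rfl | rfl | rfl
  · exact absurd hcard (by decide)
  · exact absurd hcard (by decide)
  · exact absurd hcard (by decide)
  · exact absurd hcard (by decide)
  · -- {0,1,2}
    obtain ⟨n01, n02, n12⟩ := key3 (T1 0 (by decide)) (T1 1 (by decide)) (T1 2 (by decide))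
      (by rintro ⟨a, b, c⟩
          fin_cases hi <;> fin_cases hj <;>
            first
              | exact hindep (dep_refl _)
              | exact hindep a | exact hindep b | exact hindep c
              | exact hindep (dep_symm a) | exact hindep (dep_symm b) | exact hindep (dep_symm c))
    exact caseABC n01 n02 n12
  · -- {3,6,7}
    obtain ⟨n36, n37, n67⟩ := key3 (T2 3 (by decide)) (T2 6 (by decide)) (T2 7 (by decide))
      (by rintro ⟨a, b, c⟩
          fin_cases hi <;> fin_cases hj <;>
            first
              | exact hindep (dep_refl _)
              | exact hindep a | exact hindep b | exact hindep c
              | exact hindep (dep_symm a) | exact hindep (dep_symm b) | exact hindep (dep_symm c))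
    exact caseABC
      (not_dep_symm (indep_transfer n67 (dep_symm d16) (dep_symm d07) (nz 1) (nz 0)))
      (not_dep_symm (indep_transfer n37 (dep_symm d23) (dep_symm d07) (nz 2) (nz 0)))
      (not_dep_symm (indep_transfer n36 (dep_symm d23) (dep_symm d16) (nz 2) (nz 1)))
  · -- {0,5,6}
    obtain ⟨n05, n06, n56⟩ := key3 (T3 0 (by decide)) (T3 5 (by decide)) (T3 6 (by decide))
      (by rintro ⟨a, b, c⟩
          fin_cases hi <;> fin_cases hj <;>
            first
              | exact hindep (dep_refl _)
              | exact hindep a | exact hindep b | exact hindep c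
              | exact hindep (dep_symm a) | exact hindep (dep_symm b) | exact hindep (dep_symm c))
    exact caseABD
      (indep_transfer n06 (dep_refl _) (dep_symm d16) (nz 0) (nz 1))
      (indep_transfer n05 (dep_refl _) (dep_symm d45) (nz 0) (nz 4))
      (not_dep_symm (indep_transfer n56 (dep_symm d45) (dep_symm d16) (nz 4) (nz 1)))
  · -- {1,4,7}
    obtain ⟨n14, n17, n47⟩ := key3 (T4 1 (by decide)) (T4 4 (by decide)) (T4 7 (by decide))
      (by rintro ⟨a, b, c⟩
          fin_cases hi <;> fin_cases hj <;>
            first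
              | exact hindep (dep_refl _)
              | exact hindep a | exact hindep b | exact hindep c
              | exact hindep (dep_symm a) | exact hindep (dep_symm b) | exact hindep (dep_symm c))
    exact caseABD
      (not_dep_symm (indep_transfer n17 (dep_refl _) (dep_symm d07) (nz 1) (nz 0)))
      (not_dep_symm (indep_transfer n47 (dep_refl _) (dep_symm d07) (nz 4) (nz 0)))
      n14
  · -- {1,3,5}
    obtain ⟨n13, n15, n35⟩ := key3 (T5 1 (by decide)) (T5 3 (by decide)) (T5 5 (by decide))
      (by rintro ⟨a, b, c⟩
          fin_cases hi <;> fin_cases hj <;>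
            first
              | exact hindep (dep_refl _)
              | exact hindep a | exact hindep b | exact hindep c
              | exact hindep (dep_symm a) | exact hindep (dep_symm b) | exact hindep (dep_symm c))
    exact caseBCD
      (indep_transfer n13 (dep_refl _) (dep_symm d23) (nz 1) (nz 2))
      (indep_transfer n15 (dep_refl _) (dep_symm d45) (nz 1) (nz 4))
      (indep_transfer n35 (dep_symm d23) (dep_symm d45) (nz 2) (nz 4))
  · -- {2,4,6}
    obtain ⟨n24, n26, n46⟩ := key3 (T6 2 (by decide)) (T6 4 (by decide)) (T6 6 (by decide))
      (by rintro ⟨a, b, c⟩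
          fin_cases hi <;> fin_cases hj <;>
            first
              | exact hindep (dep_refl _)
              | exact hindep a | exact hindep b | exact hindep c
              | exact hindep (dep_symm a) | exact hindep (dep_symm b) | exact hindep (dep_symm c))
    exact caseBCD
      (not_dep_symm (indep_transfer n26 (dep_refl _) (dep_symm d16) (nz 2) (nz 1)))
      (not_dep_symm (indep_transfer n46 (dep_refl _) (dep_symm d16) (nz 4) (nz 1)))
      n24
  · -- {2,5,7}
    obtain ⟨n25, n27, n57⟩ := key3 (T7 2 (by decide)) (T7 5 (by decide)) (T7 7 (by decide))
      (by rintro ⟨a, b, c⟩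
          fin_cases hi <;> fin_cases hj <;>
            first
              | exact hindep (dep_refl _)
              | exact hindep a | exact hindep b | exact hindep c
              | exact hindep (dep_symm a) | exact hindep (dep_symm b) | exact hindep (dep_symm c))
    exact caseACD
      (not_dep_symm (indep_transfer n27 (dep_refl _) (dep_symm d07) (nz 2) (nz 0)))
      (not_dep_symm (indep_transfer n57 (dep_symm d45) (dep_symm d07) (nz 4) (nz 0)))
      (indep_transfer n25 (dep_refl _) (dep_symm d45) (nz 2) (nz 4))
  · -- {0,3,4}
    obtain ⟨n03, n04, n34⟩ := key3 (T8 0 (by decide)) (T8 3 (by decide)) (T8 4 (by decide))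
      (by rintro ⟨a, b, c⟩
          fin_cases hi <;> fin_cases hj <;>
            first
              | exact hindep (dep_refl _)
              | exact hindep a | exact hindep b | exact hindep c
              | exact hindep (dep_symm a) | exact hindep (dep_symm b) | exact hindep (dep_symm c))
    exact caseACD
      (indep_transfer n03 (dep_refl _) (dep_symm d23) (nz 0) (nz 2))
      n04
      (indep_transfer n34 (dep_symm d23) (dep_refl _) (nz 2) (nz 4))
end

section
/- In Rybnikov's combinatorics, consider on the 10 lines ℓ₃,…,ℓ₁₂ the equivalence relation generated by 'sharing a triple point'. There are exactly two equivalence classes: {ℓ₃,ℓ₄,ℓ₅,ℓ₆,ℓ₇} and {ℓ₈,ℓ₉,ℓ₁₀,ℓ₁₁,ℓ₁₂}. -/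
/-- The 15 triple points of Rybnikov's combinatorics on the 13 lines `ℓ₀,…,ℓ₁₂`. -/
def rybT : Finset (Finset (Fin 13)) :=
  {{0, 1, 2}, {3, 6, 7}, {0, 5, 6}, {1, 4, 7}, {1, 3, 5}, {2, 4, 6}, {2, 5, 7}, {0, 3, 4},
   {8, 11, 12}, {0, 10, 11}, {1, 9, 12}, {1, 8, 10}, {2, 9, 11}, {2, 10, 12}, {0, 8, 9}}

/-- The ten lines `ℓ₃,…,ℓ₁₂`. -/
def tenLines : Finset (Fin 13) := {3, 4, 5, 6, 7, 8, 9, 10, 11, 12}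
/-- `ℓ₃,…,ℓ₇`. -/
def class1 : Finset (Fin 13) := {3, 4, 5, 6, 7}
/-- `ℓ₈,…,ℓ₁₂`. -/
def class2 : Finset (Fin 13) := {8, 9, 10, 11, 12}

/-- Two of the ten lines share a triple point. -/
def SharesTriple (a b : Fin 13) : Prop :=
  a ∈ tenLines ∧ b ∈ tenLines ∧ ∃ P ∈ rybT, a ∈ P ∧ b ∈ P

instance (a b : Fin 13) : Decidable (SharesTriple a b) := by
  unfold SharesTriple; infer_instance

lemma st_inv : ∀ a b : Fin 13, SharesTriple a b →
    a = b ∨ ((a ∈ class1 ∧ b ∈ class1) ∨ (a ∈ class2 ∧ b ∈ class2)) := by decide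

lemma conn1 : ∀ a ∈ class1, Relation.EqvGen SharesTriple 3 a := by
  have h36 : SharesTriple 3 6 := by decide
  have h37 : SharesTriple 3 7 := by decide
  have h35 : SharesTriple 3 5 := by decide
  have h74 : SharesTriple 7 4 := by decide
  intro a ha
  fin_cases ha
  · exact Relation.EqvGen.refl 3
  · exact Relation.EqvGen.trans _ _ _ (Relation.EqvGen.rel _ _ h37) (Relation.EqvGen.rel _ _ h74)
  · exact Relation.EqvGen.rel _ _ h35
  · exact Relation.EqvGen.rel _ _ h36
  · exact Relation.EqvGen.rel _ _ h37

lemma conn2 : ∀ a ∈ class2, Relation.EqvGen SharesTriple 8 a := by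
  have h811 : SharesTriple 8 11 := by decide
  have h812 : SharesTriple 8 12 := by decide
  have h810 : SharesTriple 8 10 := by decide
  have h119 : SharesTriple 11 9 := by decide
  intro a ha
  fin_cases ha
  · exact Relation.EqvGen.refl 8
  · exact Relation.EqvGen.trans _ _ _ (Relation.EqvGen.rel _ _ h811) (Relation.EqvGen.rel _ _ h119)
  · exact Relation.EqvGen.rel _ _ h810
  · exact Relation.EqvGen.rel _ _ h811
  · exact Relation.EqvGen.rel _ _ h812

lemma disj : ∀ x : Fin 13, ¬(x ∈ class1 ∧ x ∈ class2) := by decide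

lemma eqv_inv (a b : Fin 13) (h : Relation.EqvGen SharesTriple a b) :
    a = b ∨ ((a ∈ class1 ∧ b ∈ class1) ∨ (a ∈ class2 ∧ b ∈ class2)) := by
  induction h with
  | rel x y hxy => exact st_inv x y hxy
  | refl x => exact Or.inl rfl
  | symm x y _ ih =>
    rcases ih with h | h | h
    · exact Or.inl h.symm
    · exact Or.inr (Or.inl ⟨h.2, h.1⟩)
    · exact Or.inr (Or.inr ⟨h.2, h.1⟩)
  | trans x y z _ _ ih1 ih2 =>
    rcases ih1 with h1 | h1 | h1
    · rwa [h1]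
    all_goals rcases ih2 with h2 | h2 | h2
    · exact Or.inr (Or.inl ⟨h1.1, h2 ▸ h1.2⟩)
    · exact Or.inr (Or.inl ⟨h1.1, h2.2⟩)
    · exact absurd ⟨h1.2, h2.1⟩ (disj y)
    · exact Or.inr (Or.inr ⟨h1.1, h2 ▸ h1.2⟩)
    · exact absurd ⟨h2.1, h1.2⟩ (disj y)
    · exact Or.inr (Or.inr ⟨h1.1, h2.2⟩)

/-- On the lines `ℓ₃,…,ℓ₁₂` the equivalence relation generated by sharing a triple
point has exactly the two classes `{ℓ₃,…,ℓ₇}` and `{ℓ₈,…,ℓ₁₂}`. -/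
theorem rybnikov_two_classes :
    ∀ a ∈ tenLines, ∀ b ∈ tenLines,
      (Relation.EqvGen SharesTriple a b ↔
        ((a ∈ class1 ∧ b ∈ class1) ∨ (a ∈ class2 ∧ b ∈ class2))) := by
  intro a ha b hb
  constructor
  · intro h
    rcases eqv_inv a b h with rfl | hk
    · have : a ∈ class1 ∨ a ∈ class2 := by fin_cases ha <;> decide
      rcases this with h | h
      · exact Or.inl ⟨h, h⟩
      · exact Or.inr ⟨h, h⟩
    · exact hk
  · rintro (⟨ha1, hb1⟩ | ⟨ha2, hb2⟩)
    · exact Relation.EqvGen.trans _ _ _ (Relation.EqvGen.symm _ _ (conn1 a ha1)) (conn1 b hb1)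
    · exact Relation.EqvGen.trans _ _ _ (Relation.EqvGen.symm _ _ (conn2 a ha2)) (conn2 b hb2)
end

section
/- The automorphism group of Rybnikov's combinatorics is isomorphic to Σ₃ × ℤ/2ℤ. -/
/-- The double points of Rybnikov's combinatorics. -/
def rybD : Finset (Finset (Fin 13)) :=
  {{2, 3}, {0, 7}, {1, 6}, {4, 5}, {2, 8}, {0, 12}, {1, 11}, {9, 10}} ∪
    ((({3, 4, 5, 6, 7} : Finset (Fin 13)) ×ˢ ({8, 9, 10, 11, 12} : Finset (Fin 13))).image
      (fun p => ({p.1, p.2} : Finset (Fin 13))))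

/-- All the points of Rybnikov's combinatorics. -/
def rybP : Finset (Finset (Fin 13)) := rybD ∪ rybT

/-! ### Auxiliary definitions: the 12 automorphisms -/

/-- The central involution swapping the two halves `{3,…,7}` and `{8,…,12}`. -/
def t13 : Equiv.Perm (Fin 13) :=
  ⟨![0,1,2,8,9,10,11,12,3,4,5,6,7], ![0,1,2,8,9,10,11,12,3,4,5,6,7], by decide, by decide⟩

def g021 : Equiv.Perm (Fin 13) :=
  ⟨![0,2,1,6,5,4,3,7,11,10,9,8,12], ![0,2,1,6,5,4,3,7,11,10,9,8,12], by decide, by decide⟩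
def g102 : Equiv.Perm (Fin 13) :=
  ⟨![1,0,2,3,5,4,7,6,8,10,9,12,11], ![1,0,2,3,5,4,7,6,8,10,9,12,11], by decide, by decide⟩
def g120 : Equiv.Perm (Fin 13) :=
  ⟨![1,2,0,7,4,5,3,6,12,9,10,8,11], ![2,0,1,6,4,5,7,3,11,9,10,12,8], by decide, by decide⟩
def g201 : Equiv.Perm (Fin 13) :=
  ⟨![2,0,1,6,4,5,7,3,11,9,10,12,8], ![1,2,0,7,4,5,3,6,12,9,10,8,11], by decide, by decide⟩
def g210 : Equiv.Perm (Fin 13) :=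
  ⟨![2,1,0,7,5,4,6,3,12,10,9,11,8], ![2,1,0,7,5,4,6,3,12,10,9,11,8], by decide, by decide⟩

/-- The embedding of `Σ₃` into the half-preserving automorphisms. -/
def iota (p : Equiv.Perm (Fin 3)) : Equiv.Perm (Fin 13) :=
  if p 0 = 0 then (if p 1 = 1 then 1 else g021)
  else if p 0 = 1 then (if p 1 = 0 then g102 else g120)
  else (if p 1 = 0 then g201 else g210)

/-- The homomorphism `Σ₃ × ℤ/2ℤ →* Perm (Fin 13)`. -/
def rybφ : Equiv.Perm (Fin 3) × Multiplicative (ZMod 2) →* Equiv.Perm (Fin 13) :=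
  MonoidHom.mk' (fun x => iota x.1 * t13 ^ (x.2.toAdd.val)) (by decide)

/-- The third line through the (unique) triple point on lines `a` and `b`. -/
def compl3 (a b : Fin 13) : Fin 13 :=
  (((List.finRange 13).filter fun x => decide (({a,b,x} : Finset (Fin 13)) ∈ rybT)).headI)

def emb3 : Fin 3 → Fin 13 := ![0,1,2]
def emb4 : Fin 4 → Fin 13 := ![4,5,9,10]

/-- Reconstruction of an automorphism from its values on lines `0, 1, 2, 4, 9`. -/
def tableFun (a0 a1 a2 b4 b9 : Fin 13) : Fin 13 → Fin 13 :=
  ![a0, a1, a2, compl3 a0 b4, b4, compl3 a0 (compl3 a2 b4), compl3 a2 b4, compl3 a1 b4,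
    compl3 a0 b9, b9, compl3 a1 (compl3 a0 b9), compl3 a2 b9, compl3 a1 b9]

/-! ### Decidable facts -/

set_option maxHeartbeats 8000000 in
set_option maxRecDepth 20000 in
/-- Every element of the image of `rybφ` is an automorphism. -/
lemma ryb_allAut : ∀ x : Equiv.Perm (Fin 3) × Multiplicative (ZMod 2),
    rybP.image (Finset.image ⇑(rybφ x)) = rybP := by decide

set_option maxHeartbeats 16000000 in
set_option maxRecDepth 20000 in
/-- Any reconstructed table preserving the triple points is in the image of `rybφ`. -/
lemma ryb_M : ∀ (p q r : Fin 3) (u v : Fin 4), p ≠ q → p ≠ r → q ≠ r → u ≠ v →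
    rybT.image (Finset.image (tableFun (emb3 p) (emb3 q) (emb3 r) (emb4 u) (emb4 v))) = rybT →
    ∃ x : Equiv.Perm (Fin 3) × Multiplicative (ZMod 2),
      ⇑(rybφ x) = tableFun (emb3 p) (emb3 q) (emb3 r) (emb4 u) (emb4 v) := by decide

set_option maxHeartbeats 4000000 in
/-- Two lines lie on at most one triple point. -/
lemma ryb_unique : ∀ (p : Fin 3) (b x : Fin 13),
    ({emb3 p, b, x} : Finset (Fin 13)) ∈ rybT → x = compl3 (emb3 p) b := by decide

lemma ryb_tri_card : rybT = rybP.filter (fun P => P.card = 3) := by decide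

lemma ryb_deg5 : ∀ b : Fin 13,
    (rybT.filter (fun T => b ∈ T)).card = 5 ↔ b ∈ ({0,1,2} : Finset (Fin 13)) := by decide

set_option maxHeartbeats 4000000 in
lemma ryb_charB : ∀ c : Fin 13, c ∈ ({4,5,9,10} : Finset (Fin 13)) ↔
    ((rybT.filter (fun T => c ∈ T)).card = 3 ∧
      ¬ ∃ T ∈ rybT, c ∈ T ∧ ∀ d ∈ T, (rybT.filter (fun T' => d ∈ T')).card ≠ 5) := by decide

lemma ryb_e3 : ∀ y ∈ ({0,1,2} : Finset (Fin 13)), ∃ p : Fin 3, y = emb3 p := by decide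
lemma ryb_e4 : ∀ y ∈ ({4,5,9,10} : Finset (Fin 13)), ∃ u : Fin 4, y = emb4 u := by decide

lemma ryb_tri_comm (a b c : Fin 13) : ({a, b, c} : Finset (Fin 13)) = {a, c, b} := by
  rw [Finset.pair_comm]

/-! ### Main theorem -/


lemma ryb_TP (Q : Finset (Fin 13)) : Q ∈ rybT ↔ Q ∈ rybP ∧ Q.card = 3 := by
  rw [ryb_tri_card, Finset.mem_filter]

lemma ryb_himg (σ : Equiv.Perm (Fin 13))
    (h : ∀ P : Finset (Fin 13), P ∈ rybP ↔ P.image σ ∈ rybP) :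
    rybP.image (Finset.image ⇑σ) = rybP := by
  apply Finset.eq_of_subset_of_card_le
  · intro Q hQ
    obtain ⟨P, hP, rfl⟩ := Finset.mem_image.1 hQ
    exact (h P).1 hP
  · rw [Finset.card_image_of_injective _ (Finset.image_injective σ.injective)]

lemma ryb_hT (σ : Equiv.Perm (Fin 13))
    (h : ∀ P : Finset (Fin 13), P ∈ rybP ↔ P.image σ ∈ rybP) :
    rybT.image (Finset.image ⇑σ) = rybT := by
  apply Finset.eq_of_subset_of_card_le
  · intro Q hQ
    obtain ⟨T, hTm, rfl⟩ := Finset.mem_image.1 hQ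
    obtain ⟨hTP, hc⟩ := (ryb_TP T).1 hTm
    refine (ryb_TP _).2 ⟨(h T).1 hTP, ?_⟩
    rw [Finset.card_image_of_injective _ σ.injective, hc]
  · rw [Finset.card_image_of_injective _ (Finset.image_injective σ.injective)]

lemma ryb_hdeg (σ : Equiv.Perm (Fin 13)) (hT : rybT.image (Finset.image ⇑σ) = rybT)
    (a : Fin 13) :
    (rybT.filter (fun T => σ a ∈ T)).card = (rybT.filter (fun T => a ∈ T)).card := by
  have hmem : ∀ T ∈ rybT, Finset.image ⇑σ T ∈ rybT := by
    intro T h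
    rw [← hT]
    exact Finset.mem_image_of_mem _ h
  have hii : ∀ T : Finset (Fin 13), Finset.image ⇑σ (Finset.image ⇑σ⁻¹ T) = T := by
    intro T
    rw [Finset.image_image, show ⇑σ⁻¹ = ⇑σ.symm from rfl, Equiv.self_comp_symm,
      Finset.image_id]
  have hii' : ∀ T : Finset (Fin 13), Finset.image ⇑σ⁻¹ (Finset.image ⇑σ T) = T := by
    intro T
    rw [Finset.image_image, show ⇑σ⁻¹ = ⇑σ.symm from rfl, Equiv.symm_comp_self,
      Finset.image_id]
  have hmem' : ∀ T ∈ rybT, Finset.image ⇑σ⁻¹ T ∈ rybT := by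
    intro T h
    rw [← hT] at h
    obtain ⟨S, hS, rfl⟩ := Finset.mem_image.1 h
    rw [hii']
    exact hS
  refine Finset.card_nbij' (Finset.image ⇑σ⁻¹) (Finset.image ⇑σ) ?_ ?_ ?_ ?_
  · intro T h
    rw [Finset.mem_coe, Finset.mem_filter] at h ⊢
    refine ⟨hmem' T h.1, ?_⟩
    have := Finset.mem_image_of_mem ⇑σ⁻¹ h.2
    simpa using this
  · intro T h
    rw [Finset.mem_coe, Finset.mem_filter] at h ⊢
    exact ⟨hmem T h.1, Finset.mem_image_of_mem _ h.2⟩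
  · intro T _; exact hii T
  · intro T _; exact hii' T

set_option maxHeartbeats 1600000 in
set_option maxRecDepth 20000 in
/-- The automorphism group of Rybnikov's combinatorics, i.e. the group of permutations
of the 13 lines preserving the set of points, is isomorphic to `Σ₃ × ℤ/2ℤ`. -/
theorem rybnikov_aut_group :
    ∃ φ : Equiv.Perm (Fin 3) × Multiplicative (ZMod 2) →* Equiv.Perm (Fin 13),
      Function.Injective φ ∧
      ∀ σ : Equiv.Perm (Fin 13),
        σ ∈ Set.range φ ↔ ∀ P : Finset (Fin 13), P ∈ rybP ↔ P.image σ ∈ rybP := by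
  refine ⟨rybφ, by decide, fun σ => ⟨?_, ?_⟩⟩
  · -- every element of the image is an automorphism
    rintro ⟨x, rfl⟩ P
    constructor
    · intro hP
      rw [← ryb_allAut x]
      exact Finset.mem_image_of_mem _ hP
    · intro hP
      rw [← ryb_allAut x] at hP
      obtain ⟨Q, hQ, hQP⟩ := Finset.mem_image.1 hP
      rwa [Finset.image_injective (rybφ x).injective hQP] at hQ
  · -- every automorphism is in the image
    intro h
    have hT : rybT.image (Finset.image ⇑σ) = rybT := ryb_hT σ h
    have hTmem : ∀ T ∈ rybT, Finset.image ⇑σ T ∈ rybT := by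
      intro T hTm
      rw [← hT]
      exact Finset.mem_image_of_mem _ hTm
    have hdeg := ryb_hdeg σ hT
    -- σ preserves the class {0,1,2}
    have h012 : ∀ a ∈ ({0,1,2} : Finset (Fin 13)), σ a ∈ ({0,1,2} : Finset (Fin 13)) := by
      intro a ha
      exact (ryb_deg5 _).1 ((hdeg a).trans ((ryb_deg5 a).2 ha))
    -- σ preserves the class {4,5,9,10}
    have hB : ∀ b ∈ ({4,5,9,10} : Finset (Fin 13)), σ b ∈ ({4,5,9,10} : Finset (Fin 13)) := by
      intro b hb
      obtain ⟨hd3, hnp⟩ := (ryb_charB b).1 hb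
      refine (ryb_charB (σ b)).2 ⟨(hdeg b).trans hd3, ?_⟩
      rintro ⟨T', hT', hbT', hall⟩
      have hTi : T' ∈ rybT.image (Finset.image ⇑σ) := by rw [hT]; exact hT'
      obtain ⟨T, hTm, rfl⟩ := Finset.mem_image.1 hTi
      refine hnp ⟨T, hTm, ?_, ?_⟩
      · obtain ⟨c, hc, hcb⟩ := Finset.mem_image.1 hbT'
        rwa [σ.injective hcb] at hc
      · intro d hd
        have := hall (σ d) (Finset.mem_image_of_mem _ hd)
        rwa [hdeg d] at this
    -- the seeds
    obtain ⟨p, hp⟩ := ryb_e3 _ (h012 0 (by decide))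
    obtain ⟨q, hq⟩ := ryb_e3 _ (h012 1 (by decide))
    obtain ⟨r, hr⟩ := ryb_e3 _ (h012 2 (by decide))
    obtain ⟨u, hu⟩ := ryb_e4 _ (hB 4 (by decide))
    obtain ⟨v, hv⟩ := ryb_e4 _ (hB 9 (by decide))
    -- the triple points through the seeds
    have m034 : ({σ 0, σ 3, σ 4} : Finset (Fin 13)) ∈ rybT := by
      have := hTmem {0,3,4} (by decide); simpa using this
    have m246 : ({σ 2, σ 4, σ 6} : Finset (Fin 13)) ∈ rybT := by
      have := hTmem {2,4,6} (by decide); simpa using this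
    have m147 : ({σ 1, σ 4, σ 7} : Finset (Fin 13)) ∈ rybT := by
      have := hTmem {1,4,7} (by decide); simpa using this
    have m056 : ({σ 0, σ 5, σ 6} : Finset (Fin 13)) ∈ rybT := by
      have := hTmem {0,5,6} (by decide); simpa using this
    have m089 : ({σ 0, σ 8, σ 9} : Finset (Fin 13)) ∈ rybT := by
      have := hTmem {0,8,9} (by decide); simpa using this
    have m1912 : ({σ 1, σ 9, σ 12} : Finset (Fin 13)) ∈ rybT := by
      have := hTmem {1,9,12} (by decide); simpa using this
    have m2911 : ({σ 2, σ 9, σ 11} : Finset (Fin 13)) ∈ rybT := by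
      have := hTmem {2,9,11} (by decide); simpa using this
    have m1810 : ({σ 1, σ 8, σ 10} : Finset (Fin 13)) ∈ rybT := by
      have := hTmem {1,8,10} (by decide); simpa using this
    -- reconstruct σ from the seeds
    have h3 : σ 3 = compl3 (emb3 p) (emb4 u) := by
      rw [← hu]
      refine ryb_unique p (σ 4) (σ 3) ?_
      rw [← hp, ryb_tri_comm]
      exact m034
    have h6 : σ 6 = compl3 (emb3 r) (emb4 u) := by
      rw [← hu]
      refine ryb_unique r (σ 4) (σ 6) ?_
      rw [← hr]
      exact m246
    have h7 : σ 7 = compl3 (emb3 q) (emb4 u) := by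
      rw [← hu]
      refine ryb_unique q (σ 4) (σ 7) ?_
      rw [← hq]
      exact m147
    have h5 : σ 5 = compl3 (emb3 p) (compl3 (emb3 r) (emb4 u)) := by
      rw [← h6]
      refine ryb_unique p (σ 6) (σ 5) ?_
      rw [← hp, ryb_tri_comm]
      exact m056
    have h8 : σ 8 = compl3 (emb3 p) (emb4 v) := by
      rw [← hv]
      refine ryb_unique p (σ 9) (σ 8) ?_
      rw [← hp, ryb_tri_comm]
      exact m089
    have h12 : σ 12 = compl3 (emb3 q) (emb4 v) := by
      rw [← hv]
      refine ryb_unique q (σ 9) (σ 12) ?_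
      rw [← hq]
      exact m1912
    have h11 : σ 11 = compl3 (emb3 r) (emb4 v) := by
      rw [← hv]
      refine ryb_unique r (σ 9) (σ 11) ?_
      rw [← hr]
      exact m2911
    have h10 : σ 10 = compl3 (emb3 q) (compl3 (emb3 p) (emb4 v)) := by
      rw [← h8]
      refine ryb_unique q (σ 8) (σ 10) ?_
      rw [← hq]
      exact m1810
    have hfun : ⇑σ = tableFun (emb3 p) (emb3 q) (emb3 r) (emb4 u) (emb4 v) := by
      funext i
      fin_cases i
      exacts [hp, hq, hr, h3, hu, h5, h6, h7, h8, hv, h10, h11, h12]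
    -- distinctness of the seeds
    have hpq : p ≠ q := by
      intro e
      exact σ.injective.ne (show (0 : Fin 13) ≠ 1 by decide) (by rw [hp, hq, e])
    have hpr : p ≠ r := by
      intro e
      exact σ.injective.ne (show (0 : Fin 13) ≠ 2 by decide) (by rw [hp, hr, e])
    have hqr : q ≠ r := by
      intro e
      exact σ.injective.ne (show (1 : Fin 13) ≠ 2 by decide) (by rw [hq, hr, e])
    have huv : u ≠ v := by
      intro e
      exact σ.injective.ne (show (4 : Fin 13) ≠ 9 by decide) (by rw [hu, hv, e])
    have hTtab : rybT.image (Finset.image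
        (tableFun (emb3 p) (emb3 q) (emb3 r) (emb4 u) (emb4 v))) = rybT := by
      rw [← hfun]
      exact hT
    obtain ⟨x, hx⟩ := ryb_M p q r u v hpq hpr hqr huv hTtab
    exact ⟨x, Equiv.coe_fn_injective (hx.trans hfun.symm)⟩
end

section
/- A 3-admissible subcombinatorics of Rybnikov's combinatorics cannot contain lines from both R₁ = {ℓ₃,ℓ₄,ℓ₅,ℓ₆,ℓ₇} and R₂ = {ℓ₈,ℓ₉,ℓ₁₀,ℓ₁₁,ℓ₁₂}. -/
/-- The point set of the subcombinatorics of `(L,Ps)` induced on `L'`. -/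
def subPts {ι : Type*} [DecidableEq ι] (Ps : Finset (Finset ι)) (L' : Finset ι) :
    Finset (Finset ι) :=
  (Ps.image (fun P => P ∩ L')).filter (fun Q => 2 ≤ Q.card)


lemma dep_symm_s16 {u w : ℤ × ℤ} (h : dep u w) : dep w u := by
  unfold dep at *; linarith

lemma dep_trans_s16 {a s b : ℤ × ℤ} (ha : a ≠ 0) (h1 : dep a s) (h2 : dep a b) :
    dep s b := by
  have ha' : a.1 ≠ 0 ∨ a.2 ≠ 0 := by
    by_contra h
    push_neg at h
    exact ha (Prod.ext_iff.mpr ⟨h.1, h.2⟩)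
  unfold dep at *
  rcases ha' with h | h
  · have h3 : a.1 * (s.1 * b.2 - s.2 * b.1) = 0 := by linear_combination s.1 * h2 - b.1 * h1
    rcases mul_eq_zero.mp h3 with h4 | h4
    · exact absurd h4 h
    · linarith
  · have h3 : a.2 * (s.1 * b.2 - s.2 * b.1) = 0 := by linear_combination s.2 * h2 - b.2 * h1
    rcases mul_eq_zero.mp h3 with h4 | h4
    · exact absurd h4 h
    · linarith

lemma dep_add {u w b : ℤ × ℤ} (h1 : dep u b) (h2 : dep w b) : dep (u + w) b := by
  simp only [dep, Prod.fst_add, Prod.snd_add] at *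
  linarith

lemma dep_sub {u w b : ℤ × ℤ} (h1 : dep u b) (h2 : dep w b) : dep (u - w) b := by
  simp only [dep, Prod.fst_sub, Prod.snd_sub] at *
  linarith

lemma dep_of_dep_add_self {u w : ℤ × ℤ} (h : dep u (u + w)) : dep u w := by
  simp only [dep, Prod.fst_add, Prod.snd_add] at *
  linarith

lemma dep_refl_s16 (u : ℤ × ℤ) : dep u u := by unfold dep; ring

lemma dep_sum {b : ℤ × ℤ} {v : Fin 13 → ℤ × ℤ} {T : Finset (Fin 13)}
    (h : ∀ j ∈ T, dep (v j) b) : dep (∑ j ∈ T, v j) b := by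
  induction T using Finset.cons_induction with
  | empty => simp [dep]
  | cons i T hi ih =>
      rw [Finset.sum_cons]
      exact dep_add (h i (Finset.mem_cons_self i T))
        (ih fun j hj => h j (Finset.mem_cons_of_mem hj))

lemma mem_subPts_of_inter {P L' : Finset (Fin 13)} (hP : P ∈ rybP)
    (h2 : 2 ≤ (P ∩ L').card) : P ∩ L' ∈ subPts rybP L' := by
  simp only [subPts, Finset.mem_filter, Finset.mem_image]
  exact ⟨⟨P, hP, rfl⟩, h2⟩

lemma pair_dep {L' : Finset (Fin 13)} {v : Fin 13 → ℤ × ℤ}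
    (hadm : Admissible L' (subPts rybP L') v) {x y : Fin 13}
    (hx : x ∈ L') (hy : y ∈ L') (hxy : x ≠ y)
    (hP : ({x, y} : Finset (Fin 13)) ∈ rybP) : dep (v x) (v y) := by
  have hQ : ({x, y} : Finset (Fin 13)) ∩ L' = {x, y} :=
    Finset.inter_eq_left.mpr (Finset.insert_subset hx (Finset.singleton_subset_iff.mpr hy))
  have hcard : 2 ≤ (({x, y} : Finset (Fin 13)) ∩ L').card := by
    rw [hQ, Finset.card_pair hxy]
  have hmem := mem_subPts_of_inter hP hcard
  rw [hQ] at hmem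
  have h := hadm.2.2.1 _ hmem x (Finset.mem_insert_self x {y})
  rw [Finset.sum_pair hxy] at h
  exact dep_of_dep_add_self h

lemma key_step {L' : Finset (Fin 13)} {v : Fin 13 → ℤ × ℤ}
    (hadm : Admissible L' (subPts rybP L') v) {w : ℤ × ℤ} {k a : Fin 13}
    {P : Finset (Fin 13)} (hP : P ∈ rybP) (hk : k ∈ L') (hkP : k ∈ P)
    (ha : a ∈ L') (haP : a ∈ P) (hka : a ≠ k)
    (hva : dep (v a) w) (hvane : v a ≠ 0)
    (hrest : ∀ j ∈ P, j ∈ L' → j = k ∨ dep (v j) w) : dep (v k) w := by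
  have hkQ : k ∈ P ∩ L' := Finset.mem_inter.mpr ⟨hkP, hk⟩
  have haQ : a ∈ P ∩ L' := Finset.mem_inter.mpr ⟨haP, ha⟩
  have hcard : 2 ≤ (P ∩ L').card := Finset.one_lt_card.mpr ⟨a, haQ, k, hkQ, hka⟩
  have hmem := mem_subPts_of_inter hP hcard
  have hs := hadm.2.2.1 _ hmem a haQ
  have hSw : dep (∑ j ∈ P ∩ L', v j) w := dep_trans_s16 hvane hs hva
  have herase : dep (∑ j ∈ (P ∩ L').erase k, v j) w := by
    refine dep_sum fun j hj => ?_
    have hjk : j ≠ k := Finset.ne_of_mem_erase hj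
    have hjQ : j ∈ P ∩ L' := Finset.mem_of_mem_erase hj
    rcases hrest j (Finset.mem_inter.mp hjQ).1 (Finset.mem_inter.mp hjQ).2 with h | h
    · exact absurd h hjk
    · exact h
  have hsplit : v k + ∑ j ∈ (P ∩ L').erase k, v j = ∑ j ∈ P ∩ L', v j :=
    Finset.add_sum_erase _ _ hkQ
  have hvk : v k = (∑ j ∈ P ∩ L', v j) - ∑ j ∈ (P ∩ L').erase k, v j := by
    rw [← hsplit, add_sub_cancel_right]
  rw [hvk]
  exact dep_sub hSw herase

set_option maxRecDepth 40000 in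
lemma cross_mem : ∀ x ∈ ({3, 4, 5, 6, 7} : Finset (Fin 13)),
    ∀ y ∈ ({8, 9, 10, 11, 12} : Finset (Fin 13)),
    x ≠ y ∧ ({x, y} : Finset (Fin 13)) ∈ rybP := by decide

set_option maxRecDepth 100000 in
lemma triple_left : ∀ k ∈ ({0, 1, 2} : Finset (Fin 13)),
    ∀ a ∈ ({3, 4, 5, 6, 7} : Finset (Fin 13)),
    a ≠ k ∧ ∃ P ∈ rybP, k ∈ P ∧ a ∈ P ∧
      ∀ j ∈ P, j = k ∨ j ∈ ({3, 4, 5, 6, 7} : Finset (Fin 13)) := by decide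

lemma cover13 : ∀ x : Fin 13, x ∈ ({0, 1, 2} : Finset (Fin 13)) ∨
    x ∈ ({3, 4, 5, 6, 7} : Finset (Fin 13)) ∨
    x ∈ ({8, 9, 10, 11, 12} : Finset (Fin 13)) := by decide

/-- A 3-admissible subcombinatorics of Rybnikov's combinatorics cannot contain lines
from both `R₁ = {ℓ₃,…,ℓ₇}` and `R₂ = {ℓ₈,…,ℓ₁₂}`. -/
theorem rybnikov_admissible_sub_no_mixing :
    ∀ L' : Finset (Fin 13), ∀ v : Fin 13 → ℤ × ℤ,
      Admissible L' (subPts rybP L') v →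
      ¬ ((L' ∩ ({3, 4, 5, 6, 7} : Finset (Fin 13))).Nonempty ∧
         (L' ∩ ({8, 9, 10, 11, 12} : Finset (Fin 13))).Nonempty) := by
  intro L' v hadm
  rintro ⟨⟨a, ha⟩, ⟨b, hb⟩⟩
  rw [Finset.mem_inter] at ha hb
  obtain ⟨haL, haR⟩ := ha
  obtain ⟨hbL, hbR⟩ := hb
  have hvb : v b ≠ 0 := hadm.1 b hbL
  have hva0 : v a ≠ 0 := hadm.1 a haL
  have hR1 : ∀ x ∈ L', x ∈ ({3, 4, 5, 6, 7} : Finset (Fin 13)) → dep (v x) (v b) := by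
    intro x hx hxR
    obtain ⟨hne, hmem⟩ := cross_mem x hxR b hbR
    exact pair_dep hadm hx hbL hne hmem
  have hvab : dep (v a) (v b) := hR1 a haL haR
  have hR2 : ∀ x ∈ L', x ∈ ({8, 9, 10, 11, 12} : Finset (Fin 13)) → dep (v x) (v b) := by
    intro x hx hxR
    obtain ⟨hne, hmem⟩ := cross_mem a haR x hxR
    have h1 : dep (v a) (v x) := pair_dep hadm haL hx hne hmem
    exact dep_trans_s16 hva0 h1 hvab
  have h012 : ∀ x ∈ L', x ∈ ({0, 1, 2} : Finset (Fin 13)) → dep (v x) (v b) := by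
    intro x hx hx0
    obtain ⟨hne, P, hP, hxP, haP, hrest⟩ := triple_left x hx0 a haR
    refine key_step hadm hP hx hxP haL haP hne hvab hva0 ?_
    intro j hjP hjL
    rcases hrest j hjP with h | h
    · exact Or.inl h
    · exact Or.inr (hR1 j hjL h)
  have hall : ∀ x ∈ L', dep (v x) (v b) := by
    intro x hx
    rcases cover13 x with h | h | h
    · exact h012 x hx h
    · exact hR1 x hx h
    · exact hR2 x hx h
  obtain ⟨P, hPmem, _, i, hi, j, hj, hndep⟩ := hadm.2.1
  have hPL : P ⊆ L' := by
    simp only [subPts, Finset.mem_filter, Finset.mem_image] at hPmem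
    obtain ⟨⟨P', _, rfl⟩, _⟩ := hPmem
    exact Finset.inter_subset_right
  exact hndep (dep_trans_s16 hvb (dep_symm_s16 (hall i (hPL hi))) (dep_symm_s16 (hall j (hPL hj))))
end
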